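/- Let n ≥ 3 and A₁, A₂, A₃ be real symmetric n×n matrices with s₁A₁ + s₂A₂ + s₃A₃ positive definite for some s ∈ ℝ³. Then the cone Ω = {(xᵀA₁x, xᵀA₂x, xᵀA₃x) : x ∈ ℝⁿ} is acute, i.e., there is no nonzero y ∈ ℝ³ with both y ∈ Ω and −y ∈ Ω. -/

import Mathlib

/-!
A definite combination `∑ sᵢ Aᵢ` turns `y ↦ s ⬝ᵥ y` into a linear functional that is strictly
positive on every nonzero point of `Ω`, since `s ⬝ᵥ (xᵀA₁x, …) = xᵀ(∑ sᵢ Aᵢ)x`. A set on which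
some linear functional is positive away from `0` cannot contain both `y` and `-y` for `y ≠ 0`.
-/

open Matrix

lemma neg_notMem_of_forall_pos {E : Type*} [AddGroup E] (ℓ : E →+ ℝ) {K : Set E}
    (hK : ∀ y ∈ K, y ≠ 0 → 0 < ℓ y) {y : E} (hy : y ∈ K) (hy₀ : y ≠ 0) : -y ∉ K := fun hny =>
  (hK y hy hy₀).not_gt (by simpa using hK (-y) hny (neg_ne_zero.2 hy₀))

section QuadraticImage

variable {ι m : Type*} [Fintype ι] [Fintype m]

def quadraticImage (A : ι → Matrix m m ℝ) : Set (ι → ℝ) :=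
  Set.range fun x : m → ℝ => fun i => x ⬝ᵥ A i *ᵥ x

lemma dotProduct_sum_smul_mulVec (A : ι → Matrix m m ℝ) (s : ι → ℝ) (x : m → ℝ) :
    x ⬝ᵥ (∑ i, s i • A i) *ᵥ x = s ⬝ᵥ fun i => x ⬝ᵥ A i *ᵥ x := by
  simp only [sum_mulVec, dotProduct_sum, smul_mulVec, dotProduct_smul, smul_eq_mul]
  rfl

lemma dotProduct_pos_of_mem_quadraticImage {A : ι → Matrix m m ℝ} {s : ι → ℝ}
    (hs : (∑ i, s i • A i).PosDef) {y : ι → ℝ} (hy : y ∈ quadraticImage A) (hy₀ : y ≠ 0) :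
    0 < s ⬝ᵥ y := by
  obtain ⟨x, rfl⟩ := hy
  have hx₀ : x ≠ 0 := by
    rintro rfl
    exact hy₀ (funext fun i => by simp)
  simpa [dotProduct_sum_smul_mulVec] using hs.dotProduct_mulVec_pos hx₀

lemma neg_notMem_quadraticImage {A : ι → Matrix m m ℝ} {s : ι → ℝ}
    (hs : (∑ i, s i • A i).PosDef) {y : ι → ℝ} (hy : y ∈ quadraticImage A) (hy₀ : y ≠ 0) :
    -y ∉ quadraticImage A :=
  neg_notMem_of_forall_pos (AddMonoidHom.mk' (s ⬝ᵥ ·) (dotProduct_add s))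
    (fun _ => dotProduct_pos_of_mem_quadraticImage hs) hy hy₀

end QuadraticImage

lemma setOf_eq_quadraticImage_three {m : Type*} [Fintype m] (A₁ A₂ A₃ : Matrix m m ℝ) :
    {y : Fin 3 → ℝ | ∃ x : m → ℝ, y = ![x ⬝ᵥ A₁ *ᵥ x, x ⬝ᵥ A₂ *ᵥ x, x ⬝ᵥ A₃ *ᵥ x]} =
      quadraticImage ![A₁, A₂, A₃] := by
  ext y
  refine exists_congr fun x => ⟨fun h => ?_, fun h => ?_⟩ <;> subst h <;>
    ext i <;> fin_cases i <;> rfl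

theorem polyak_acuteness_general (n : ℕ)
    (A₁ A₂ A₃ : Matrix (Fin n) (Fin n) ℝ)
    (hs : ∃ s : Fin 3 → ℝ, (s 0 • A₁ + s 1 • A₂ + s 2 • A₃).PosDef) :
    ¬ ∃ y : Fin 3 → ℝ, y ≠ 0 ∧
      y ∈ {y : Fin 3 → ℝ | ∃ x : Fin n → ℝ,
        y = ![x ⬝ᵥ A₁ *ᵥ x, x ⬝ᵥ A₂ *ᵥ x, x ⬝ᵥ A₃ *ᵥ x]} ∧
      -y ∈ {y : Fin 3 → ℝ | ∃ x : Fin n → ℝ,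
        y = ![x ⬝ᵥ A₁ *ᵥ x, x ⬝ᵥ A₂ *ᵥ x, x ⬝ᵥ A₃ *ᵥ x]} := by
  rintro ⟨y, hy₀, hy, hny⟩
  obtain ⟨s, hs⟩ := hs
  have hs' : (∑ i, s i • ![A₁, A₂, A₃] i).PosDef := by
    simpa [Fin.sum_univ_three] using hs
  rw [setOf_eq_quadraticImage_three] at hy hny
  exact neg_notMem_quadraticImage hs' hy hy₀ hny

theorem polyak_acuteness (n : ℕ) (hn : 3 ≤ n)
    (A₁ A₂ A₃ : Matrix (Fin n) (Fin n) ℝ)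
    (h₁ : A₁.IsSymm) (h₂ : A₂.IsSymm) (h₃ : A₃.IsSymm)
    (hs : ∃ s : Fin 3 → ℝ, (s 0 • A₁ + s 1 • A₂ + s 2 • A₃).PosDef) :
    ¬ ∃ y : Fin 3 → ℝ, y ≠ 0 ∧
      y ∈ {y : Fin 3 → ℝ | ∃ x : Fin n → ℝ,
        y = ![x ⬝ᵥ A₁ *ᵥ x, x ⬝ᵥ A₂ *ᵥ x, x ⬝ᵥ A₃ *ᵥ x]} ∧
      -y ∈ {y : Fin 3 → ℝ | ∃ x : Fin n → ℝ,
        y = ![x ⬝ᵥ A₁ *ᵥ x, x ⬝ᵥ A₂ *ᵥ x, x ⬝ᵥ A₃ *ᵥ x]} :=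
  polyak_acuteness_general n A₁ A₂ A₃ hs
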